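/- Let A be a pseudo-hoop and F a normal filter of A. Then F is a fantastic filter if and only if A/F is a Wajsberg pseudo-hoop. -/

import Mathlib

universe u v

class PseudoHoop (A : Type u) extends One A, Mul A where
  rimp : A → A → A
  limp : A → A → A
  mul_one' : ∀ x : A, x * 1 = x
  one_mul' : ∀ x : A, 1 * x = x
  rimp_self : ∀ x : A, rimp x x = 1
  limp_self : ∀ x : A, limp x x = 1
  mul_rimp : ∀ x y z : A, rimp (x * y) z = rimp x (rimp y z)
  mul_limp : ∀ x y z : A, limp (x * y) z = limp y (limp x z)
  div₁ : ∀ x y : A, (rimp x y) * x = (rimp y x) * y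
  div₂ : ∀ x y : A, (rimp x y) * x = x * (limp x y)
  div₃ : ∀ x y : A, x * (limp x y) = y * (limp y x)

namespace PseudoHoop

/-- The order on a pseudo-hoop: `x ≤ y` iff `x → y = 1`. -/
def ple {A : Type u} [PseudoHoop A] (x y : A) : Prop := rimp x y = 1

/-- The meet `x ∧ y = (x → y) ⊙ x`. -/
def meet {A : Type u} [PseudoHoop A] (x y : A) : A := (rimp x y) * x

/-- `x ∨₁ y = (x → y) ⇝ y`. -/
def join₁ {A : Type u} [PseudoHoop A] (x y : A) : A := limp (rimp x y) y

/-- `x ∨₂ y = (x ⇝ y) → y`. -/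
def join₂ {A : Type u} [PseudoHoop A] (x y : A) : A := rimp (limp x y) y

/-- Iterated implication: `x →⁰ y = y`, `x →ⁿ⁺¹ y = x → (x →ⁿ y)`. -/
def rimpPow {A : Type u} [PseudoHoop A] (x : A) : ℕ → A → A
  | 0, y => y
  | n + 1, y => rimp x (rimpPow x n y)

/-- A filter of a pseudo-hoop. -/
structure IsFilter {A : Type u} [PseudoHoop A] (F : Set A) : Prop where
  nonempty : F.Nonempty
  mul_mem : ∀ {x y : A}, x ∈ F → y ∈ F → x * y ∈ F
  upward : ∀ {x y : A}, x ∈ F → ple x y → y ∈ F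

/-- A normal filter: `x → y ∈ F` iff `x ⇝ y ∈ F`. -/
def IsNormalFilter {A : Type u} [PseudoHoop A] (F : Set A) : Prop :=
  IsFilter F ∧ ∀ x y : A, rimp x y ∈ F ↔ limp x y ∈ F

def IsProper {A : Type u} [PseudoHoop A] (F : Set A) : Prop := F ≠ Set.univ

/-- A pseudo-hoop is simple if `{1}` is its unique proper filter. -/
def IsSimple (A : Type u) [PseudoHoop A] : Prop :=
  ∀ F : Set A, IsFilter F → IsProper F → F = {1}

/-- A pseudo-hoop is Wajsberg if `x ∨₁ y = y ∨₁ x` and `x ∨₂ y = y ∨₂ x`. -/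
def IsWajsberg (A : Type u) [PseudoHoop A] : Prop :=
  ∀ x y : A, join₁ x y = join₁ y x ∧ join₂ x y = join₂ y x

/-- A fantastic filter. -/
def IsFantasticFilter {A : Type u} [PseudoHoop A] (F : Set A) : Prop :=
  IsFilter F ∧ ∀ x y : A,
    (rimp y x ∈ F → rimp (join₁ x y) x ∈ F) ∧
    (limp y x ∈ F → limp (join₂ x y) x ∈ F)

def IS₂ {A : Type u} [PseudoHoop A] (μ : A → A) : Prop :=
  ∀ x y : A, μ (x * y) = μ x * μ (limp x (x * y)) ∧
    μ (x * y) = μ (rimp y (x * y)) * μ y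

def IS₃ {A : Type u} [PseudoHoop A] (μ : A → A) : Prop :=
  ∀ x y : A, μ (μ x * μ y) = μ x * μ y

def IS₄ {A : Type u} [PseudoHoop A] (μ : A → A) : Prop :=
  ∀ x y : A, μ (rimp (μ x) (μ y)) = rimp (μ x) (μ y) ∧
    μ (limp (μ x) (μ y)) = limp (μ x) (μ y)

/-- Type I state operator. -/
def IsStateI {A : Type u} [PseudoHoop A] (μ : A → A) : Prop :=
  (∀ x y : A, μ (rimp x y) = rimp (μ (join₁ x y)) (μ y) ∧
      μ (limp x y) = limp (μ (join₂ x y)) (μ y)) ∧ IS₂ μ ∧ IS₃ μ ∧ IS₄ μ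

/-- Type II state operator. -/
def IsStateII {A : Type u} [PseudoHoop A] (μ : A → A) : Prop :=
  (∀ x y : A, μ (rimp x y) = rimp (μ (join₁ y x)) (μ y) ∧
      μ (limp x y) = limp (μ (join₂ y x)) (μ y)) ∧ IS₂ μ ∧ IS₃ μ ∧ IS₄ μ

/-- Type III state operator. -/
def IsStateIII {A : Type u} [PseudoHoop A] (μ : A → A) : Prop :=
  (∀ x y : A, μ (rimp x y) = rimp (μ x) (μ (meet x y)) ∧
      μ (limp x y) = limp (μ x) (μ (meet x y))) ∧ IS₂ μ ∧ IS₃ μ ∧ IS₄ μ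

end PseudoHoop

open PseudoHoop

/-- A bounded pseudo-hoop: a pseudo-hoop with a least element `0`. -/
class BoundedPseudoHoop (A : Type u) extends PseudoHoop A, Zero A where
  zero_le : ∀ x : A, rimp 0 x = 1

namespace BoundedPseudoHoop

/-- `x⁻ = x → 0`. -/
def negr {A : Type u} [BoundedPseudoHoop A] (x : A) : A := rimp x 0

/-- `x∼ = x ⇝ 0`. -/
def negl {A : Type u} [BoundedPseudoHoop A] (x : A) : A := limp x 0

/-- A bounded pseudo-hoop is good if `x⁻∼ = x∼⁻` for all `x`. -/
def IsGood (A : Type u) [BoundedPseudoHoop A] : Prop :=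
  ∀ x : A, negl (negr x) = negr (negl x)

/-- A bounded pseudo-hoop is involutive if `x⁻∼ = x∼⁻ = x` for all `x`. -/
def IsInvolutive (A : Type u) [BoundedPseudoHoop A] : Prop :=
  ∀ x : A, negl (negr x) = x ∧ negr (negl x) = x

/-- The set of dense elements. -/
def Den (A : Type u) [BoundedPseudoHoop A] : Set A :=
  {x : A | negl (negr x) = 1}

/-- An involutive filter: `x⁻∼ → x ∈ F` and `x∼⁻ ⇝ x ∈ F` for all `x`. -/
def IsInvolutiveFilter {A : Type u} [BoundedPseudoHoop A] (F : Set A) : Prop :=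
  IsFilter F ∧ ∀ x : A, rimp (negl (negr x)) x ∈ F ∧ limp (negr (negl x)) x ∈ F

end BoundedPseudoHoop

open BoundedPseudoHoop

/-!
Everything rests on three facts about `∨₁`: `x ≤ x ∨₁ y`, `y ≤ x ∨₁ y`, and monotonicity of `∨₁`
in its first argument. If `F` is fantastic, its defining property for the pair `(y ∨₁ x, y)`
(where `y → (y ∨₁ x) = 1 ∈ F`) gives `((y ∨₁ x) ∨₁ y) → (y ∨₁ x) ∈ F`, and
`x ∨₁ y ≤ (y ∨₁ x) ∨₁ y` yields `(x ∨₁ y) → (y ∨₁ x) ∈ F`. Conversely `y → x ≤ (y ∨₁ x) → x`,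
so once `(x ∨₁ y) → (y ∨₁ x) ∈ F`, transitivity of `→` modulo `F` turns `y → x ∈ F` into
`(x ∨₁ y) → x ∈ F`. The statements about `⇝` and `∨₂` are the same ones read in the mirror
pseudo-hoop, and normality of `F` makes `→` and `⇝` interchangeable in membership tests.
-/

namespace PseudoHoop

/-- The mirror image of a pseudo-hoop: multiplication reversed, `→` and `⇝` exchanged. Its `∨₁`
is the `∨₂` of `A`, so every fact about `→` and `∨₁` has a mirror fact about `⇝` and `∨₂`. -/
def Dual (A : Type u) : Type u := A

variable {A : Type u} [PseudoHoop A]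

instance : PseudoHoop (Dual A) where
  one := (1 : A)
  mul := fun (x y : A) => y * x
  rimp := limp (A := A)
  limp := rimp (A := A)
  mul_one' := one_mul' (A := A)
  one_mul' := mul_one' (A := A)
  rimp_self := limp_self (A := A)
  limp_self := rimp_self (A := A)
  mul_rimp x y z := mul_limp (A := A) y x z
  mul_limp x y z := mul_rimp (A := A) y x z
  div₁ := div₃ (A := A)
  div₂ x y := (div₂ (A := A) x y).symm
  div₃ := div₁ (A := A)

theorem ple_refl (x : A) : ple x x := rimp_self x

theorem ple_antisymm {x y : A} (hxy : ple x y) (hyx : ple y x) : x = y := by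
  have h := div₁ x y
  rwa [show rimp x y = 1 from hxy, show rimp y x = 1 from hyx, one_mul', one_mul'] at h

theorem mul_assoc' (x y z : A) : x * y * z = x * (y * z) := by
  have h : ∀ w, rimp (x * y * z) w = rimp (x * (y * z)) w := fun w => by simp only [mul_rimp]
  exact ple_antisymm ((h _).trans (rimp_self _)) ((h _).symm.trans (rimp_self _))

theorem one_rimp_eq_rimp_one_mul (x : A) : rimp 1 x = rimp x 1 * x := by
  simpa only [mul_one'] using (div₁ x 1).symm

theorem one_rimp_rimp (x y : A) : rimp 1 (rimp x y) = rimp x y := by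
  rw [← mul_rimp, one_mul']

theorem one_rimp (x : A) : rimp 1 x = x := by
  have hu : rimp (rimp x 1) 1 * rimp x 1 = rimp x 1 := by
    rw [← one_rimp_eq_rimp_one_mul, one_rimp_rimp]
  have hx : rimp x (rimp 1 x) = 1 := by rw [← mul_rimp, mul_one', rimp_self]
  -- `x ≤ 1 → x`, so `div₁` gives `x = ((1 → x) → x) (1 → x)`, which collapses to `(x → 1) x`
  have h := div₁ x (rimp 1 x)
  rw [hx, one_mul', one_rimp_eq_rimp_one_mul, mul_rimp, rimp_self, ← mul_assoc', hu] at h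
  rw [one_rimp_eq_rimp_one_mul]
  exact h.symm

theorem rimp_one (x : A) : rimp x 1 = 1 := by
  have h : rimp x 1 * x = x := by rw [← one_rimp_eq_rimp_one_mul, one_rimp]
  calc rimp x 1 = rimp (rimp x 1 * x) 1 := by rw [h]
    _ = 1 := by rw [mul_rimp, rimp_self]

theorem limp_one (x : A) : limp x 1 = 1 := rimp_one (A := Dual A) x

theorem ple_one (x : A) : ple x 1 := rimp_one x

theorem limp_eq_one_of_ple {x y : A} (h : ple x y) : limp x y = 1 := by
  have hx : x = y * limp y x := by
    have h₂ := div₂ x y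
    rw [show rimp x y = 1 from h, one_mul'] at h₂
    exact h₂.trans (div₃ x y)
  rw [hx, mul_limp, limp_self, limp_one]

theorem ple_iff_limp_eq_one {x y : A} : ple x y ↔ limp x y = 1 :=
  ⟨limp_eq_one_of_ple, limp_eq_one_of_ple (A := Dual A)⟩

theorem dual_ple_iff {x y : A} : ple (A := Dual A) x y ↔ ple x y :=
  (ple_iff_limp_eq_one (A := A)).symm

theorem ple_rimp_iff {x y z : A} : ple x (rimp y z) ↔ ple (x * y) z := by
  rw [ple, ple, mul_rimp]

theorem ple_limp_iff {x y z : A} : ple y (limp x z) ↔ ple (x * y) z := by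
  rw [ple_iff_limp_eq_one, ple_iff_limp_eq_one, mul_limp]

theorem ple_rimp_self (x y : A) : ple x (rimp y x) :=
  ple_rimp_iff.2 (ple_limp_iff.1 (by rw [limp_self]; exact ple_one y))

theorem ple_limp_self (x y : A) : ple x (limp y x) :=
  dual_ple_iff.1 (ple_rimp_self (A := Dual A) x y)

theorem rimp_ple_rimp_of_ple {x y : A} (h : ple x y) (z : A) : ple (rimp y z) (rimp x z) := by
  have hx : x = rimp y x * y := by
    simpa only [show rimp x y = 1 from h, one_mul'] using div₁ x y
  rw [hx, mul_rimp]
  exact ple_rimp_self _ _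

theorem limp_ple_limp_of_ple {x y : A} (h : ple x y) (z : A) : ple (limp y z) (limp x z) :=
  dual_ple_iff.1 (rimp_ple_rimp_of_ple (A := Dual A) (dual_ple_iff.2 h) z)

theorem rimp_mul_rimp_ple (x y z : A) : ple (rimp y z * rimp x y) (rimp x z) := by
  rw [← ple_rimp_iff, ← mul_rimp]
  exact rimp_ple_rimp_of_ple (ple_rimp_iff.1 (ple_refl _)) z

theorem ple_join₁_left (x y : A) : ple x (join₁ x y) :=
  ple_limp_iff.2 (ple_rimp_iff.1 (ple_refl _))

theorem ple_join₁_right (x y : A) : ple y (join₁ x y) := ple_limp_self y _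

theorem ple_join₂_left (x y : A) : ple x (join₂ x y) :=
  dual_ple_iff.1 (ple_join₁_left (A := Dual A) x y)

theorem join₁_ple_join₁_of_ple {x x' : A} (h : ple x x') (y : A) :
    ple (join₁ x y) (join₁ x' y) :=
  limp_ple_limp_of_ple (rimp_ple_rimp_of_ple h y) y

namespace IsFilter

variable {F : Set A}

theorem dual (hF : IsFilter F) : IsFilter (A := Dual A) F where
  nonempty := hF.nonempty
  mul_mem hx hy := hF.mul_mem hy hx
  upward hx h := hF.upward hx (dual_ple_iff.1 h)

theorem one_mem (hF : IsFilter F) : (1 : A) ∈ F :=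
  let ⟨x, hx⟩ := hF.nonempty
  hF.upward hx (ple_one x)

theorem rimp_mem_of_ple (hF : IsFilter F) {x y : A} (h : ple x y) : rimp x y ∈ F := by
  rw [show rimp x y = 1 from h]
  exact hF.one_mem

theorem rimp_trans (hF : IsFilter F) {x y z : A} (hxy : rimp x y ∈ F) (hyz : rimp y z ∈ F) :
    rimp x z ∈ F :=
  hF.upward (hF.mul_mem hyz hxy) (rimp_mul_rimp_ple x y z)

theorem rimp_join₁_mem_of_rimp_mem (hF : IsFilter F) {x y : A}
    (hcomm : rimp (join₁ x y) (join₁ y x) ∈ F) (hyx : rimp y x ∈ F) : rimp (join₁ x y) x ∈ F :=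
  hF.rimp_trans hcomm (hF.upward hyx (ple_join₂_left _ _))

theorem limp_join₂_mem_of_limp_mem (hF : IsFilter F) {x y : A}
    (hcomm : limp (join₂ x y) (join₂ y x) ∈ F) (hyx : limp y x ∈ F) : limp (join₂ x y) x ∈ F :=
  hF.dual.rimp_join₁_mem_of_rimp_mem hcomm hyx

end IsFilter

namespace IsFantasticFilter

variable {F : Set A}

theorem dual (hF : IsFantasticFilter F) : IsFantasticFilter (A := Dual A) F :=
  ⟨hF.1.dual, fun x y => (hF.2 x y).symm⟩

theorem rimp_join₁_mem (hF : IsFantasticFilter F) (x y : A) :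
    rimp (join₁ x y) (join₁ y x) ∈ F := by
  obtain ⟨hFil, hFan⟩ := hF
  have h := (hFan (join₁ y x) y).1 (hFil.rimp_mem_of_ple (ple_join₁_left y x))
  exact hFil.upward h
    (rimp_ple_rimp_of_ple (join₁_ple_join₁_of_ple (ple_join₁_right y x) y) _)

theorem limp_join₂_mem (hF : IsFantasticFilter F) (x y : A) :
    limp (join₂ x y) (join₂ y x) ∈ F :=
  hF.dual.rimp_join₁_mem x y

end IsFantasticFilter

theorem isFantasticFilter_iff {F : Set A} (hF : IsFilter F) :
    IsFantasticFilter F ↔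
      ∀ x y : A, rimp (join₁ x y) (join₁ y x) ∈ F ∧ limp (join₂ x y) (join₂ y x) ∈ F :=
  ⟨fun h x y => ⟨h.rimp_join₁_mem x y, h.limp_join₂_mem x y⟩,
    fun h => ⟨hF, fun x y =>
      ⟨hF.rimp_join₁_mem_of_rimp_mem (h x y).1, hF.limp_join₂_mem_of_limp_mem (h x y).2⟩⟩⟩

end PseudoHoop

/-- `F` is fantastic iff `A/F` is Wajsberg; the latter is expressed via the
congruence `Θ_F`: `[x] ∨₁ [y] = [y] ∨₁ [x]` and `[x] ∨₂ [y] = [y] ∨₂ [x]` in `A/F`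
means `(x ∨₁ y) Θ_F (y ∨₁ x)` and `(x ∨₂ y) Θ_F (y ∨₂ x)`. -/
theorem stmt14 {A : Type u} [PseudoHoop A] (F : Set A) (hF : IsNormalFilter F) :
    IsFantasticFilter F ↔ ∀ x y : A,
      (rimp (join₁ x y) (join₁ y x) ∈ F ∧ rimp (join₁ y x) (join₁ x y) ∈ F) ∧
      (rimp (join₂ x y) (join₂ y x) ∈ F ∧ rimp (join₂ y x) (join₂ x y) ∈ F) := by
  obtain ⟨hFil, hNorm⟩ := hF
  rw [isFantasticFilter_iff hFil]
  constructor
  · intro h x y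
    exact ⟨⟨(h x y).1, (h y x).1⟩, ⟨(hNorm _ _).2 (h x y).2, (hNorm _ _).2 (h y x).2⟩⟩
  · intro h x y
    exact ⟨(h x y).1.1, (hNorm _ _).1 (h x y).2.1⟩
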